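/- Suppose Ax = b and let y ∈ ℂⁿ have residual r = b − Ay. Let Ω ⊆ {1,…,m} be a nonempty set of s row indices, let i* ∈ Ω maximize |r_(j)|/‖A_(j)‖₂ over j ∈ Ω, and set x' = K_{i*}(y). Assume there exist ε, ε̃ ≥ 0 with ε < 1 such that (1/s)·Σ_{j∈Ω} |r_(j)|² ≥ ((1−ε)/(m−1))·‖r‖₂² and (1/s)·Σ_{j∈Ω} ‖A_(j)‖₂² ≤ ((1+ε̃)/(m−1))·γ. Then ‖x' − x‖₂² ≤ (1 − ((1−ε)/(1+ε̃))·(λ_min(A^H A)/γ))·‖y − x‖₂², where γ = max_{1≤i≤m} Σ_{j≠i} ‖A_(j)‖₂². -/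

import Mathlib

open Matrix

/-- Squared Euclidean 2-norm of a vector in `ℂⁿ`. -/
noncomputable def rnsq {n : ℕ} (v : Fin n → ℂ) : ℝ := ∑ j, ‖v j‖ ^ 2

/-- The Kaczmarz update of `y` with respect to row `i` of `A`. -/
noncomputable def kacz {m n : ℕ} (A : Matrix (Fin m) (Fin n) ℂ) (b : Fin m → ℂ)
    (i : Fin m) (y : Fin n → ℂ) : Fin n → ℂ :=
  fun j => y j + ((b i - ∑ l, A i l * y l) / ((∑ l, ‖A i l‖ ^ 2 : ℝ) : ℂ)) * (starRingEnd ℂ) (A i j)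

/-- The smallest eigenvalue of the Hermitian positive semidefinite matrix `AᴴA`. -/
noncomputable def lamMin {m n : ℕ} (A : Matrix (Fin m) (Fin n) ℂ) : ℝ :=
  ⨅ k : Fin n, (Matrix.isHermitian_conjTranspose_mul_self A).eigenvalues k

lemma dotc {k : ℕ} (u : Fin k → ℂ) :
    ∑ j, (starRingEnd ℂ) (u j) * u j = ((∑ j, ‖u j‖ ^ 2 : ℝ) : ℂ) := by
  push_cast
  exact Finset.sum_congr rfl fun j _ => by rw [Complex.conj_mul']

lemma rayleigh {m n : ℕ} (A : Matrix (Fin m) (Fin n) ℂ) (v : Fin n → ℂ) :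
    lamMin A * (∑ j, ‖v j‖ ^ 2) ≤ ∑ j, ‖∑ l, A j l * v l‖ ^ 2 := by
  set hA := Matrix.isHermitian_conjTranspose_mul_self A with hhA
  set U : Matrix (Fin n) (Fin n) ℂ := (hA.eigenvectorUnitary : Matrix (Fin n) (Fin n) ℂ) with hU
  set w : Fin n → ℂ := (star U) *ᵥ v with hw
  have hsw : star w = star v ᵥ* U := by
    rw [hw, Matrix.star_mulVec, ← Matrix.star_eq_conjTranspose, star_star]
  have hnorm : (∑ k, ‖w k‖ ^ 2) = ∑ j, ‖v j‖ ^ 2 := by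
    have h0 : ∑ k, (starRingEnd ℂ) (w k) * w k = ∑ j, (starRingEnd ℂ) (v j) * v j := by
      have h1 : ∑ k, (starRingEnd ℂ) (w k) * w k = dotProduct (star w) w := rfl
      have h2 : ∑ j, (starRingEnd ℂ) (v j) * v j = dotProduct (star v) v := rfl
      rw [h1, h2, hsw, hw, ← dotProduct_mulVec, Matrix.mulVec_mulVec,
        (Matrix.mem_unitaryGroup_iff).mp hA.eigenvectorUnitary.2, Matrix.one_mulVec]
    rw [dotc, dotc] at h0
    exact_mod_cast h0
  have hquad : ((∑ j, ‖∑ l, A j l * v l‖ ^ 2 : ℝ) : ℂ)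
      = ∑ k, ((hA.eigenvalues k : ℂ)) * ((‖w k‖ ^ 2 : ℝ) : ℂ) := by
    have hAv : ∀ j, (∑ l, A j l * v l) = (A *ᵥ v) j := fun j => rfl
    have h1 : ((∑ j, ‖(A *ᵥ v) j‖ ^ 2 : ℝ) : ℂ)
        = dotProduct (star (A *ᵥ v)) (A *ᵥ v) := (dotc _).symm
    have h2 : dotProduct (star (A *ᵥ v)) (A *ᵥ v)
        = dotProduct (star v) ((Aᴴ * A) *ᵥ v) := by
      rw [Matrix.star_mulVec, ← dotProduct_mulVec, Matrix.mulVec_mulVec]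
    have h3 : (Aᴴ * A) = U * Matrix.diagonal (RCLike.ofReal ∘ hA.eigenvalues) * star U :=
      by have := hA.spectral_theorem; rw [Unitary.conjStarAlgAut_apply] at this; exact this
    rw [h3] at h2
    simp only [hAv]
    rw [h1, h2, ← Matrix.mulVec_mulVec, ← Matrix.mulVec_mulVec,
      dotProduct_mulVec (star v), ← hsw, ← hw]
    simp only [dotProduct, Matrix.mulVec_diagonal, Pi.star_apply]
    refine Finset.sum_congr rfl fun k _ => ?_
    rw [show (RCLike.ofReal ∘ hA.eigenvalues) k = ((hA.eigenvalues k : ℝ) : ℂ) from rfl]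
    have : (starRingEnd ℂ) (w k) * w k = ((‖w k‖ ^ 2 : ℝ) : ℂ) := by
      rw [Complex.conj_mul']; push_cast; ring
    calc (starRingEnd ℂ) (w k) * (((hA.eigenvalues k : ℝ) : ℂ) * w k)
        = ((hA.eigenvalues k : ℝ) : ℂ) * ((starRingEnd ℂ) (w k) * w k) := by ring
      _ = _ := by rw [this]
  have hreal : (∑ j, ‖∑ l, A j l * v l‖ ^ 2) = ∑ k, hA.eigenvalues k * ‖w k‖ ^ 2 := by
    have := hquad
    push_cast at this
    exact_mod_cast this
  rw [hreal, ← hnorm, Finset.mul_sum]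
  refine Finset.sum_le_sum fun k _ => ?_
  have hle : lamMin A ≤ hA.eigenvalues k := ciInf_le (Finite.bddBelow_range _) k
  exact mul_le_mul_of_nonneg_right hle (by positivity)

lemma pyth {n : ℕ} (a v : Fin n → ℂ) (hs : (0:ℝ) < ∑ l, ‖a l‖ ^ 2) :
    (∑ j, ‖-(v j) + ((∑ l, a l * v l) / ((∑ l, ‖a l‖ ^ 2 : ℝ) : ℂ)) * (starRingEnd ℂ) (a j)‖ ^ 2)
      = (∑ j, ‖v j‖ ^ 2) - ‖∑ l, a l * v l‖ ^ 2 / (∑ l, ‖a l‖ ^ 2) := by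
  set s : ℝ := ∑ l, ‖a l‖ ^ 2 with hsdef
  set t : ℂ := ∑ l, a l * v l with htdef
  have hs0 : ((s:ℝ) : ℂ) ≠ 0 := by exact_mod_cast hs.ne'
  set u : Fin n → ℂ := fun j => -(v j) + (t / ((s:ℝ):ℂ)) * (starRingEnd ℂ) (a j) with hu
  have e1 : ∑ j, (starRingEnd ℂ) (v j) * v j = ((∑ j, ‖v j‖ ^ 2 : ℝ) : ℂ) := dotc v
  have e2 : ∑ j, (starRingEnd ℂ) (v j) * (starRingEnd ℂ) (a j) = (starRingEnd ℂ) t := by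
    rw [htdef, map_sum]
    exact Finset.sum_congr rfl fun j _ => by rw [_root_.map_mul]; ring
  have e4 : ∑ j, a j * (starRingEnd ℂ) (a j) = ((s:ℝ) : ℂ) := by
    rw [hsdef]
    push_cast
    exact Finset.sum_congr rfl fun j _ => Complex.mul_conj' _
  have key : ∑ j, (starRingEnd ℂ) (u j) * u j
      = ((∑ j, ‖v j‖ ^ 2 : ℝ) : ℂ) - (starRingEnd ℂ) t * t / ((s:ℝ):ℂ) := by
    have expand : ∀ j, (starRingEnd ℂ) (u j) * u j
        = (starRingEnd ℂ) (v j) * v j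
          - (t / ((s:ℝ):ℂ)) * ((starRingEnd ℂ) (v j) * (starRingEnd ℂ) (a j))
          - ((starRingEnd ℂ) t / ((s:ℝ):ℂ)) * (a j * v j)
          + ((starRingEnd ℂ) t * t / (((s:ℝ):ℂ) * ((s:ℝ):ℂ))) * (a j * (starRingEnd ℂ) (a j)) := by
      intro j
      simp only [hu, map_add, map_neg, _root_.map_mul, _root_.map_div₀, Complex.conj_ofReal,
        Complex.conj_conj]
      ring
    rw [Finset.sum_congr rfl fun j _ => expand j]
    rw [Finset.sum_add_distrib, Finset.sum_sub_distrib, Finset.sum_sub_distrib,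
      ← Finset.mul_sum, ← Finset.mul_sum, ← Finset.mul_sum, e1, e2, e4, ← htdef]
    field_simp
    ring
  have hct : (starRingEnd ℂ) t * t = ((‖t‖ ^ 2 : ℝ) : ℂ) := by
    rw [Complex.conj_mul']; push_cast; ring
  rw [dotc u, hct] at key
  have : ((∑ j, ‖u j‖ ^ 2 : ℝ) : ℂ) = (((∑ j, ‖v j‖ ^ 2) - ‖t‖ ^ 2 / s : ℝ) : ℂ) := by
    rw [key]; push_cast; ring
  exact_mod_cast this

/-- One-step convergence bound (3.45) of the PRKS method: under the sampling accuracy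
assumptions on the sample `Ω` of size `s` (with accuracy parameters `ε, ε̃`),
`‖x' − x‖₂² ≤ (1 − ((1−ε)/(1+ε̃))·(λ_min(AᴴA)/γ))·‖y − x‖₂²`,
where `γ = max_i Σ_{j≠i} ‖A_(j)‖₂²`. -/
theorem stmt13 {m n : ℕ} (hm : 2 ≤ m) (hn : 0 < n) (A : Matrix (Fin m) (Fin n) ℂ)
    (hrows : ∀ i, A i ≠ 0) (b : Fin m → ℂ)
    (x : Fin n → ℂ) (hx : ∀ i', ∑ l, A i' l * x l = b i')
    (y : Fin n → ℂ) (Ω : Finset (Fin m)) (hΩ : Ω.Nonempty)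
    (istar : Fin m) (histarmem : istar ∈ Ω)
    (histar : ∀ j ∈ Ω, ‖b j - ∑ l, A j l * y l‖ / Real.sqrt (∑ l, ‖A j l‖ ^ 2) ≤
      ‖b istar - ∑ l, A istar l * y l‖ / Real.sqrt (∑ l, ‖A istar l‖ ^ 2))
    (ε εt : ℝ) (hε0 : 0 ≤ ε) (hε1 : ε < 1) (hεt0 : 0 ≤ εt)
    (hres : ((1 - ε) / (m - 1 : ℝ)) * ∑ j, ‖b j - ∑ l, A j l * y l‖ ^ 2 ≤
      (1 / (Ω.card : ℝ)) * ∑ j ∈ Ω, ‖b j - ∑ l, A j l * y l‖ ^ 2)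
    (hrow : (1 / (Ω.card : ℝ)) * ∑ j ∈ Ω, ∑ l, ‖A j l‖ ^ 2 ≤
      ((1 + εt) / (m - 1 : ℝ)) *
        Finset.univ.sup' ⟨⟨0, by omega⟩, Finset.mem_univ _⟩
          (fun i => ∑ j ∈ Finset.univ.erase i, ∑ l, ‖A j l‖ ^ 2)) :
    rnsq (fun j => kacz A b istar y j - x j) ≤
      (1 - ((1 - ε) / (1 + εt)) *
          (lamMin A /
            Finset.univ.sup' ⟨⟨0, by omega⟩, Finset.mem_univ _⟩
              (fun i => ∑ j ∈ Finset.univ.erase i, ∑ l, ‖A j l‖ ^ 2))) *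
        rnsq (fun j => y j - x j) := by
  classical
  haveI : Nonempty (Fin n) := ⟨⟨0, hn⟩⟩
  set v : Fin n → ℂ := fun l => x l - y l with hv
  have hrv : ∀ j, b j - ∑ l, A j l * y l = ∑ l, A j l * v l := by
    intro j
    rw [← hx j, ← Finset.sum_sub_distrib]
    exact Finset.sum_congr rfl fun l _ => by rw [hv]; ring
  have hspos : ∀ j, (0:ℝ) < ∑ l, ‖A j l‖ ^ 2 := by
    intro j
    rcases Function.ne_iff.mp (hrows j) with ⟨l, hl⟩
    have hl' : A j l ≠ 0 := by simpa using hl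
    have h1 : (0:ℝ) < ‖A j l‖ ^ 2 := pow_pos (norm_pos_iff.mpr hl') 2
    exact lt_of_lt_of_le h1
      (Finset.single_le_sum (f := fun l => ‖A j l‖ ^ 2) (fun i _ => by positivity)
        (Finset.mem_univ l))
  -- sup' term
  set G : ℝ := Finset.univ.sup' ⟨⟨0, by omega⟩, Finset.mem_univ _⟩
      (fun i : Fin m => ∑ j ∈ Finset.univ.erase i, ∑ l, ‖A j l‖ ^ 2) with hG
  have hGpos : 0 < G := by
    have hmem : (⟨1, by omega⟩ : Fin m) ∈ Finset.univ.erase (⟨0, by omega⟩ : Fin m) := by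
      refine Finset.mem_erase.mpr ⟨?_, Finset.mem_univ _⟩
      intro h
      exact absurd (congrArg Fin.val h) (by simp)
    have h1 : (0:ℝ) < ∑ j ∈ Finset.univ.erase (⟨0, by omega⟩ : Fin m), ∑ l, ‖A j l‖ ^ 2 :=
      lt_of_lt_of_le (hspos ⟨1, by omega⟩)
        (Finset.single_le_sum (f := fun j => ∑ l, ‖A j l‖ ^ 2) (fun i _ => (hspos i).le) hmem)
    exact lt_of_lt_of_le h1
      (Finset.le_sup' (fun i : Fin m => ∑ j ∈ Finset.univ.erase i, ∑ l, ‖A j l‖ ^ 2)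
        (Finset.mem_univ (⟨0, by omega⟩ : Fin m)))
  -- Pythagoras
  have hkx : ∀ j, kacz A b istar y j - x j
      = -(v j) + ((∑ l, A istar l * v l) / ((∑ l, ‖A istar l‖ ^ 2 : ℝ) : ℂ))
          * (starRingEnd ℂ) (A istar j) := by
    intro j
    rw [kacz, hrv istar, hv]
    ring
  have hpyth : rnsq (fun j => kacz A b istar y j - x j)
      = (∑ j, ‖v j‖ ^ 2) - ‖∑ l, A istar l * v l‖ ^ 2 / (∑ l, ‖A istar l‖ ^ 2) := by
    rw [rnsq]
    simp only [hkx]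
    exact pyth _ v (hspos istar)
  have hyx : rnsq (fun j => y j - x j) = ∑ j, ‖v j‖ ^ 2 := by
    rw [rnsq]
    exact Finset.sum_congr rfl fun j _ => by rw [hv, norm_sub_rev]
  set K : ℝ := ‖∑ l, A istar l * v l‖ ^ 2 / (∑ l, ‖A istar l‖ ^ 2) with hKdef
  have hK0 : 0 ≤ K := by positivity
  -- pointwise bound on Ω
  have hpt : ∀ j ∈ Ω, ‖∑ l, A j l * v l‖ ^ 2 ≤ K * (∑ l, ‖A j l‖ ^ 2) := by
    intro j hj
    have h := histar j hj
    rw [hrv, hrv] at h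
    have h2 : (‖∑ l, A j l * v l‖ / Real.sqrt (∑ l, ‖A j l‖ ^ 2)) ^ 2
        ≤ (‖∑ l, A istar l * v l‖ / Real.sqrt (∑ l, ‖A istar l‖ ^ 2)) ^ 2 :=
      pow_le_pow_left₀ (by positivity) h 2
    rw [div_pow, div_pow, Real.sq_sqrt (hspos j).le, Real.sq_sqrt (hspos istar).le] at h2
    exact (div_le_iff₀ (hspos j)).mp h2
  have hsumΩ : ∑ j ∈ Ω, ‖∑ l, A j l * v l‖ ^ 2 ≤ K * ∑ j ∈ Ω, (∑ l, ‖A j l‖ ^ 2) := by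
    rw [Finset.mul_sum]
    exact Finset.sum_le_sum hpt
  have hcard : (0:ℝ) < (Ω.card : ℝ) := by exact_mod_cast Finset.card_pos.mpr hΩ
  have hm1 : (0:ℝ) < (m:ℝ) - 1 := by
    have : (2:ℝ) ≤ (m:ℝ) := by exact_mod_cast hm
    linarith
  set R : ℝ := ∑ j, ‖∑ l, A j l * v l‖ ^ 2 with hRdef
  simp only [hrv] at hres
  have hchain : ((1 - ε) / ((m:ℝ) - 1)) * R ≤ K * (((1 + εt) / ((m:ℝ) - 1)) * G) := by
    calc ((1 - ε) / ((m:ℝ) - 1)) * R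
        ≤ (1 / (Ω.card : ℝ)) * ∑ j ∈ Ω, ‖∑ l, A j l * v l‖ ^ 2 := hres
      _ ≤ (1 / (Ω.card : ℝ)) * (K * ∑ j ∈ Ω, (∑ l, ‖A j l‖ ^ 2)) := by
          apply mul_le_mul_of_nonneg_left hsumΩ
          positivity
      _ = K * ((1 / (Ω.card : ℝ)) * ∑ j ∈ Ω, (∑ l, ‖A j l‖ ^ 2)) := by ring
      _ ≤ K * (((1 + εt) / ((m:ℝ) - 1)) * G) := mul_le_mul_of_nonneg_left hrow hK0
  have hmul : (1 - ε) * R ≤ K * ((1 + εt) * G) := by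
    have h := mul_le_mul_of_nonneg_left hchain hm1.le
    calc (1 - ε) * R = ((m:ℝ) - 1) * (((1 - ε) / ((m:ℝ) - 1)) * R) := by
          field_simp
      _ ≤ ((m:ℝ) - 1) * (K * (((1 + εt) / ((m:ℝ) - 1)) * G)) := h
      _ = K * ((1 + εt) * G) := by field_simp
  -- eigenvalue bound
  have hlam0 : 0 ≤ lamMin A := by
    rw [lamMin]
    exact le_ciInf fun k => Matrix.eigenvalues_conjTranspose_mul_self_nonneg A k
  have hray : lamMin A * (∑ j, ‖v j‖ ^ 2) ≤ R := rayleigh A v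
  have hεt1 : (0:ℝ) < 1 + εt := by linarith
  have hfinal : ((1 - ε) / (1 + εt)) * (lamMin A / G) * (∑ j, ‖v j‖ ^ 2) ≤ K := by
    rw [div_mul_div_comm, div_mul_eq_mul_div, div_le_iff₀ (by positivity)]
    calc (1 - ε) * lamMin A * (∑ j, ‖v j‖ ^ 2)
        = (1 - ε) * (lamMin A * (∑ j, ‖v j‖ ^ 2)) := by ring
      _ ≤ (1 - ε) * R := mul_le_mul_of_nonneg_left hray (by linarith)
      _ ≤ K * ((1 + εt) * G) := hmul
  rw [hpyth, hyx]
  nlinarith [hfinal]
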